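/- Let C = [C_1,...,C_r] be a normal triangular set with constant-free initials only in the parameters, and define C* = [C_1, prem(C_2,[C_1]), ..., prem(C_r,[C_1,...,C_{r−1}])]. Then C* is a normal triangular set, and in fact ini(C_i*) = I_1^{q_1}···I_{i−1}^{q_{i−1}} I_i for suitable nonnegative integers q_j, where I_j = ini(C_j). -/

import Mathlib

open MvPolynomial

namespace CharDec

variable {K : Type*} [Field K] {σ : Type*} [LinearOrder σ]

/-- Lexicographic comparison of exponent vectors (larger variables dominate):
`a ≤ b` iff `a = b` or at the greatest index where they differ, `a` is smaller. -/
def lexLe (a b : σ →₀ ℕ) : Prop :=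
  a = b ∨ ∃ i : σ, a i < b i ∧ ∀ j : σ, i < j → a j = b j

/-- `m` is the leading monomial of `f` with respect to the lex term ordering. -/
def IsLeadMon (f : MvPolynomial σ K) (m : σ →₀ ℕ) : Prop :=
  m ∈ f.support ∧ ∀ m' ∈ f.support, lexLe m' m

/-- `f` has leading (greatest actually occurring) variable `i`. -/
def HasLV (f : MvPolynomial σ K) (i : σ) : Prop :=
  i ∈ f.vars ∧ ∀ j ∈ f.vars, j ≤ i

/-- The coefficient of `(X i) ^ d` in `f`, as a polynomial in the remaining variables. -/
noncomputable def coeffWrt (i : σ) (d : ℕ) (f : MvPolynomial σ K) :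
    MvPolynomial σ K :=
  ∑ m ∈ f.support.filter (fun m => m i = d), monomial (m.update i 0) (f.coeff m)

/-- The initial (leading coefficient in the leading variable) of `f` with
respect to the variable `i`. -/
noncomputable def initialWrt (i : σ) (f : MvPolynomial σ K) : MvPolynomial σ K :=
  coeffWrt i (f.degreeOf i) f

/-- `R` is the pseudo-remainder of `P` on pseudo-division by `Q` with respect
to the variable `y` (classical pseudo-division, with the exponent
`deg P - deg Q + 1` when `deg P ≥ deg Q`, and `0` otherwise). -/
def IsPrem (y : σ) (Q P R : MvPolynomial σ K) : Prop :=
  ∃ A : MvPolynomial σ K,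
    (initialWrt y Q) ^ (P.degreeOf y + 1 - Q.degreeOf y) * P = A * Q + R ∧
    R.degreeOf y < Q.degreeOf y

/-- `IterPrem P L R` : `R` is the iterated pseudo-remainder of `P` by the
list `L` of pairs (leading variable, divisor), divisors being used from the
head of the list on. -/
def IterPrem : MvPolynomial σ K → List (σ × MvPolynomial σ K) →
    MvPolynomial σ K → Prop
  | P, [], R => R = P
  | P, e :: L, R => ∃ S, IsPrem e.1 e.2 P S ∧ IterPrem S L R

/-- A triangular set: a list of (leading variable, polynomial) pairs with
strictly increasing leading variables. -/
structure TriSet (K : Type*) [Field K] (σ : Type*) [LinearOrder σ] where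
  elems : List (σ × MvPolynomial σ K)
  sorted : elems.Pairwise (fun e e' => e.1 < e'.1)
  hlv : ∀ e ∈ elems, HasLV e.2 e.1

namespace TriSet

/-- The list of leading variables of a triangular set. -/
def lvs (T : TriSet K σ) : List σ := T.elems.map Prod.fst

/-- The list of polynomials of a triangular set. -/
def polys (T : TriSet K σ) : List (MvPolynomial σ K) := T.elems.map Prod.snd

/-- A variable is a parameter of `T` if it is not a leading variable of `T`. -/
def IsParam (T : TriSet K σ) (j : σ) : Prop := j ∉ T.lvs

/-- `T` is normal: every initial involves only the parameters of `T`. -/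
def Normal (T : TriSet K σ) : Prop :=
  ∀ e ∈ T.elems, ∀ j ∈ (initialWrt e.1 e.2).vars, T.IsParam j

/-- `T` is zero-dimensional: every variable is a leading variable of `T`. -/
def ZeroDim (T : TriSet K σ) : Prop := ∀ i : σ, i ∈ T.lvs

/-- The product of the initials of `T`. -/
noncomputable def prodInit (T : TriSet K σ) : MvPolynomial σ K :=
  (T.elems.map fun e => initialWrt e.1 e.2).prod

/-- The ideal generated by the polynomials of `T`. -/
noncomputable def ideal (T : TriSet K σ) : Ideal (MvPolynomial σ K) :=
  Ideal.span {p | ∃ e ∈ T.elems, p = e.2}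

end TriSet

/-- The saturation `I : J^∞` of an ideal `I` by an element `J`. -/
def satBy (I : Ideal (MvPolynomial σ K)) (J : MvPolynomial σ K) :
    Ideal (MvPolynomial σ K) where
  carrier := {p | ∃ k : ℕ, J ^ k * p ∈ I}
  zero_mem' := ⟨0, by simp⟩
  add_mem' := by
    rintro a b ⟨k, hk⟩ ⟨l, hl⟩
    refine ⟨k + l, ?_⟩
    have h : J ^ (k + l) * (a + b) = J ^ l * (J ^ k * a) + J ^ k * (J ^ l * b) := by ring
    rw [h]
    exact add_mem (Ideal.mul_mem_left _ _ hk) (Ideal.mul_mem_left _ _ hl)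
  smul_mem' := by
    rintro c a ⟨k, hk⟩
    refine ⟨k, ?_⟩
    have h : J ^ k * (c • a) = c * (J ^ k * a) := by rw [smul_eq_mul]; ring
    rw [h]
    exact Ideal.mul_mem_left _ _ hk

namespace TriSet

/-- The saturated ideal `sat(T) = ⟨T⟩ : (∏ initials)^∞` of a triangular set. -/
noncomputable def sat (T : TriSet K σ) : Ideal (MvPolynomial σ K) :=
  satBy T.ideal T.prodInit

/-- The triangular set formed by the first `i` elements of `T`. -/
def take (T : TriSet K σ) (i : ℕ) : TriSet K σ :=
  ⟨T.elems.take i, T.sorted.sublist (List.take_sublist i T.elems),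
    fun e he => T.hlv e (List.mem_of_mem_take he)⟩

/-- `T` is a regular set: each initial is neither zero nor a zero-divisor
modulo the saturated ideal of the preceding subset. -/
def Regular (T : TriSet K σ) : Prop :=
  ∀ i : ℕ, ∀ h : i < T.elems.length,
    initialWrt (T.elems.get ⟨i, h⟩).1 (T.elems.get ⟨i, h⟩).2 ∉ (T.take i).sat ∧
    ∀ p : MvPolynomial σ K,
      initialWrt (T.elems.get ⟨i, h⟩).1 (T.elems.get ⟨i, h⟩).2 * p ∈ (T.take i).sat →
        p ∈ (T.take i).sat

end TriSet

/-- The zero set, in (the algebraic closure of `K`)^σ, of a set of polynomials. -/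
def zeroSet (S : Set (MvPolynomial σ K)) : Set (σ → AlgebraicClosure K) :=
  {x | ∀ p ∈ S, aeval x p = 0}

/-- `Zero(T / ini(T))` : the common zeros of `T` at which no initial of `T` vanishes. -/
def TriSet.zeroQuasi (T : TriSet K σ) : Set (σ → AlgebraicClosure K) :=
  {x | (∀ e ∈ T.elems, aeval x e.2 = 0) ∧
       (∀ e ∈ T.elems, aeval x (initialWrt e.1 e.2) ≠ 0)}

/-- `G` is a (finite) Gröbner basis of `I` with respect to the lex term
ordering: `G ⊆ I` and the leading monomial of every nonzero element of `I` is
divisible by the leading monomial of some element of `G`. -/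
def IsGB (G : Set (MvPolynomial σ K)) (I : Ideal (MvPolynomial σ K)) : Prop :=
  G.Finite ∧ G ⊆ ↑I ∧
  ∀ f ∈ I, f ≠ 0 → ∃ g ∈ G, ∃ mf mg, IsLeadMon f mf ∧ IsLeadMon g mg ∧ ∀ j, mg j ≤ mf j

/-- `G` is the reduced lex Gröbner basis of `I`. -/
def IsReducedGB (G : Set (MvPolynomial σ K)) (I : Ideal (MvPolynomial σ K)) : Prop :=
  IsGB G I ∧ (0 : MvPolynomial σ K) ∉ G ∧
  (∀ g ∈ G, ∀ m, IsLeadMon g m → g.coeff m = 1) ∧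
  (∀ g ∈ G, ∀ g' ∈ G, g' ≠ g → ∀ m ∈ g.support, ∀ m', IsLeadMon g' m' →
    ¬ (∀ j, m' j ≤ m j))

/-- `C` is the W-characteristic set extracted from the (reduced lex Gröbner
basis) `G`: for each leading variable occurring in `G`, `C` contains the
lex-minimal element of `G` with that leading variable. -/
def IsWCharOf (C : TriSet K σ) (G : Set (MvPolynomial σ K)) : Prop :=
  (∀ e ∈ C.elems, e.2 ∈ G ∧
    ∀ g ∈ G, HasLV g e.1 → ∀ mg me, IsLeadMon g mg → IsLeadMon e.2 me → lexLe me mg) ∧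
  (∀ g ∈ G, ∀ i : σ, HasLV g i → i ∈ C.lvs)

/-- The Sylvester-style matrix of two univariate polynomials. -/
noncomputable def sylvester {R : Type*} [CommRing R] (f g : Polynomial R) :
    Matrix (Fin (f.natDegree + g.natDegree)) (Fin (f.natDegree + g.natDegree)) R :=
  Matrix.of fun i j =>
    if (i : ℕ) < g.natDegree then
      (if (i : ℕ) ≤ (j : ℕ) then f.coeff ((j : ℕ) - (i : ℕ)) else 0)
    else
      (if (i : ℕ) - g.natDegree ≤ (j : ℕ) then g.coeff ((j : ℕ) - ((i : ℕ) - g.natDegree))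
       else 0)

/-- The resultant of two univariate polynomials, as the determinant of their
Sylvester matrix. -/
noncomputable def resultantP {R : Type*} [CommRing R] (f g : Polynomial R) : R :=
  (sylvester f g).det

/-- View a multivariate polynomial as a univariate polynomial in the variable `i`. -/
noncomputable def toUni (i : σ) (f : MvPolynomial σ K) :
    Polynomial (MvPolynomial σ K) :=
  aeval (fun j => if j = i then Polynomial.X else Polynomial.C (X j)) f

/-- The resultant of two multivariate polynomials with respect to the variable `i`. -/
noncomputable def resWrt (i : σ) (f g : MvPolynomial σ K) : MvPolynomial σ K :=
  resultantP (toUni i f) (toUni i g)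

/-- The iterated resultant of `f` with respect to a list of
(leading variable, divisor) pairs, used from the head of the list on. -/
noncomputable def iterRes : MvPolynomial σ K → List (σ × MvPolynomial σ K) →
    MvPolynomial σ K
  | f, [] => f
  | f, e :: L => iterRes (resWrt e.1 f e.2) L

end CharDec

/-!
Pseudo-divide `P`, with leading variable `z`, by `Q`, with leading variable `y < z`:
`I^q P = A Q + R` with `I = ini(Q)` and `deg_y R < deg_y Q`. Compare the coefficients of `x_z^k`
for `k ≥ deg_z P` (and of `x_w^k`, `k > 0`, for `w > z`). On the left they are free of `y`,
because `I` and `ini(P)` are. So the corresponding coefficient of `A` must vanish, which forces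
`deg_z R = deg_z P` and `ini(R) = I^q ini(P)`, and no variable above `z` occurs in `R`. Iterating
along `C_{i-1}, …, C_1` multiplies `ini(C_i)` by powers of earlier initials, and these involve
only parameters.
-/

namespace CharDec

lemma eq_of_eq_mul_add_of_degreeOf_lt {R σ : Type*} [CommRing R] [NoZeroDivisors R] {y : σ}
    {Q T B W : MvPolynomial σ R}
    (hT : y ∉ T.vars) (heq : T = B * Q + W) (hW : degreeOf y W < degreeOf y Q) : W = T := by
  suffices hB : B = 0 by rw [heq, hB, zero_mul, zero_add]
  by_contra hB
  have hQ : Q ≠ 0 := by rintro rfl; simp at hW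
  have hBQ : degreeOf y (B * Q) ≤ max (degreeOf y T) (degreeOf y W) := by
    rw [show B * Q = T - W by rw [heq]; ring]
    exact degreeOf_sub_le _ _ _
  have hTy : degreeOf y T = 0 := by simpa [mem_vars_iff_degreeOf_ne_zero] using hT
  rw [degreeOf_mul_eq hB hQ, hTy] at hBQ
  omega

variable {K : Type*} [Field K] {σ : Type*} [LinearOrder σ]

lemma HasLV.ne_zero {f : MvPolynomial σ K} {i : σ} (h : HasLV f i) : f ≠ 0 := by
  rintro rfl
  simp [HasLV] at h

lemma toUni_eq_C {i : σ} {g : MvPolynomial σ K} (h : i ∉ g.vars) :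
    toUni i g = Polynomial.C g := by
  calc toUni i g = aeval (fun j => Polynomial.C (X j)) g := by
        rw [toUni, aeval_def, aeval_def]
        refine eval₂_congr _ _ _ fun {j c} hj hc => ?_
        have hjv : j ∈ g.vars := (mem_vars_iff_mem_support j).2 ⟨c, mem_support_iff.2 hc, hj⟩
        simp [show j ≠ i from fun e => h (e ▸ hjv)]
    _ = Polynomial.C g := (aeval_algebraMap_apply (R := K) _ X g).trans (by simp)

lemma toUni_add (i : σ) (f g : MvPolynomial σ K) :
    toUni i (f + g) = toUni i f + toUni i g := map_add _ _ _

lemma toUni_mul (i : σ) (f g : MvPolynomial σ K) :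
    toUni i (f * g) = toUni i f * toUni i g := map_mul _ _ _

lemma toUni_sum {ι : Type*} (i : σ) (s : Finset ι) (f : ι → MvPolynomial σ K) :
    toUni i (∑ x ∈ s, f x) = ∑ x ∈ s, toUni i (f x) := map_sum _ _ _

lemma toUni_monomial (i : σ) (m : σ →₀ ℕ) (c : K) :
    toUni i (monomial m c) =
      Polynomial.C (monomial (m.update i 0) c) * Polynomial.X ^ (m i) := by
  have hsplit : monomial m c = monomial (m.update i 0) c * X i ^ (m i) := by
    rw [X_pow_eq_monomial, monomial_mul, mul_one, Finsupp.update_eq_erase_add_single,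
      Finsupp.single_zero, add_zero, Finsupp.erase_add_single]
  have hfree : i ∉ (monomial (m.update i 0) c).vars := by
    by_cases hc : c = 0
    · simp [hc]
    · simp [vars_monomial hc]
  rw [hsplit, toUni_mul, toUni_eq_C hfree]
  simp [toUni]

lemma coeff_toUni (i : σ) (d : ℕ) (f : MvPolynomial σ K) :
    (toUni i f).coeff d = coeffWrt i d f := by
  conv_lhs => rw [← support_sum_monomial_coeff f]
  rw [toUni_sum, Polynomial.finsetSum_coeff, coeffWrt, Finset.sum_filter]
  refine Finset.sum_congr rfl fun m _ => ?_
  rw [toUni_monomial, Polynomial.coeff_C_mul, Polynomial.coeff_X_pow]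
  by_cases h : m i = d
  · simp [h]
  · simp [h, Ne.symm h]

lemma coeff_coeffWrt (i : σ) (d : ℕ) (f : MvPolynomial σ K) (μ : σ →₀ ℕ) :
    coeff μ (coeffWrt i d f) = if μ i = 0 then coeff (μ.update i d) f else 0 := by
  simp only [coeffWrt, coeff_sum, coeff_monomial]
  split_ifs with hμ
  · rw [Finset.sum_eq_single (μ.update i d)]
    · have : μ.update i 0 = μ := by rw [← hμ, Finsupp.update_self]
      simp [this]
    · rintro m hm hne
      rw [if_neg]
      rintro rfl
      simp only [Finset.mem_filter] at hm
      simp [← hm.2] at hne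
    · intro h
      simp_all
  · refine Finset.sum_eq_zero fun m _ => if_neg ?_
    rintro rfl
    simp at hμ

lemma mem_support_coeffWrt {i : σ} {d : ℕ} {f : MvPolynomial σ K} {μ : σ →₀ ℕ} :
    μ ∈ (coeffWrt i d f).support ↔ μ i = 0 ∧ μ.update i d ∈ f.support := by
  simp [mem_support_iff, coeff_coeffWrt]

lemma coeffWrt_add (i : σ) (d : ℕ) (f g : MvPolynomial σ K) :
    coeffWrt i d (f + g) = coeffWrt i d f + coeffWrt i d g := by
  rw [← coeff_toUni, toUni_add, Polynomial.coeff_add, coeff_toUni, coeff_toUni]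

lemma coeffWrt_mul_of_notMem_vars {i : σ} {g : MvPolynomial σ K} (d : ℕ)
    (f : MvPolynomial σ K) (h : i ∉ g.vars) : coeffWrt i d (f * g) = coeffWrt i d f * g := by
  rw [← coeff_toUni, toUni_mul, toUni_eq_C h, Polynomial.coeff_mul_C, coeff_toUni]

lemma coeffWrt_eq_zero_of_degreeOf_lt {i : σ} {d : ℕ} {f : MvPolynomial σ K}
    (h : degreeOf i f < d) : coeffWrt i d f = 0 := by
  ext μ
  rw [coeff_coeffWrt, coeff_zero]
  split_ifs
  · by_contra hμ
    have := monomial_le_degreeOf i (mem_support_iff.2 hμ)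
    simp only [Finsupp.update_apply, if_pos] at this
    omega
  · rfl

lemma initialWrt_ne_zero {f : MvPolynomial σ K} (hf : f ≠ 0) (i : σ) :
    initialWrt i f ≠ 0 := by
  obtain ⟨m, hm, hmax⟩ :=
    Finset.exists_mem_eq_sup f.support (support_nonempty.2 hf) (fun m => m i)
  rw [initialWrt, degreeOf_eq_sup, hmax, ne_zero_iff]
  refine ⟨m.update i 0, ?_⟩
  simpa [coeff_coeffWrt] using mem_support_iff.1 hm

lemma vars_coeffWrt_subset (i : σ) (d : ℕ) (f : MvPolynomial σ K) :
    (coeffWrt i d f).vars ⊆ f.vars := by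
  intro j hj
  obtain ⟨μ, hμ, hjμ⟩ := (mem_vars_iff_mem_support j).1 hj
  obtain ⟨hμi, hμf⟩ := mem_support_coeffWrt.1 hμ
  have hji : j ≠ i := by rintro rfl; simp_all
  refine (mem_vars_iff_mem_support j).2 ⟨_, hμf, ?_⟩
  simpa [Finsupp.update_apply, hji] using hjμ

lemma notMem_vars_initialWrt (i : σ) (f : MvPolynomial σ K) :
    i ∉ (initialWrt i f).vars := by
  intro hi
  obtain ⟨μ, hμ, hiμ⟩ := (mem_vars_iff_mem_support i).1 hi
  exact Finsupp.mem_support_iff.1 hiμ (mem_support_coeffWrt.1 hμ).1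

lemma degreeOf_coeffWrt_le {i j : σ} (hji : j ≠ i) (d : ℕ) (f : MvPolynomial σ K) :
    degreeOf j (coeffWrt i d f) ≤ degreeOf j f := by
  refine degreeOf_le_iff.2 fun μ hμ => ?_
  have := monomial_le_degreeOf j (mem_support_coeffWrt.1 hμ).2
  simpa [Finsupp.update_apply, hji] using this

lemma degreeOf_eq_of_coeffWrt_ne_zero {i : σ} {d : ℕ} {f : MvPolynomial σ K}
    (hd : coeffWrt i d f ≠ 0) (hhigh : ∀ k, d < k → coeffWrt i k f = 0) :
    degreeOf i f = d := by
  refine le_antisymm (not_lt.1 fun hlt => ?_) (not_lt.1 fun hlt => ?_)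
  · have hf : f ≠ 0 := by rintro rfl; simp [coeffWrt] at hd
    exact initialWrt_ne_zero hf i (hhigh _ hlt)
  · exact hd (coeffWrt_eq_zero_of_degreeOf_lt hlt)

lemma IsPrem.coeffWrt_eq {y w : σ} {Q P R : MvPolynomial σ K} (hpr : IsPrem y Q P R)
    (hwQ : w ∉ Q.vars) (hwy : w ≠ y) (k : ℕ) (hP : y ∉ (coeffWrt w k P).vars) :
    coeffWrt w k R =
      initialWrt y Q ^ (P.degreeOf y + 1 - Q.degreeOf y) * coeffWrt w k P := by
  obtain ⟨A, heq, hdeg⟩ := hpr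
  set J := initialWrt y Q ^ (P.degreeOf y + 1 - Q.degreeOf y)
  have hwJ : w ∉ J.vars := fun h => hwQ (vars_coeffWrt_subset _ _ _ (vars_pow _ _ h))
  have hyJ : y ∉ J.vars := fun h => notMem_vars_initialWrt y Q (vars_pow _ _ h)
  have hcoeff : J * coeffWrt w k P = coeffWrt w k A * Q + coeffWrt w k R := by
    rw [mul_comm, ← coeffWrt_mul_of_notMem_vars k P hwJ, ← coeffWrt_mul_of_notMem_vars k A hwQ,
      ← coeffWrt_add, mul_comm, heq]
  exact eq_of_eq_mul_add_of_degreeOf_lt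
    (fun h => (Finset.mem_union.1 (vars_mul _ _ h)).elim hyJ hP) hcoeff
    ((degreeOf_coeffWrt_le hwy.symm k R).trans_lt hdeg)

lemma IsPrem.hasLV_and_initialWrt_eq {y z : σ} {Q P R : MvPolynomial σ K}
    (hpr : IsPrem y Q P R) (hQ : HasLV Q y) (hP : HasLV P z) (hyz : y < z)
    (hy : y ∉ (initialWrt z P).vars) :
    HasLV R z ∧
      initialWrt z R =
        initialWrt y Q ^ (P.degreeOf y + 1 - Q.degreeOf y) * initialWrt z P := by
  have hwQ : ∀ w, y < w → w ∉ Q.vars := fun w hw h => (hQ.2 w h).not_gt hw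
  have hvanish : ∀ w k, y < w → degreeOf w P < k → coeffWrt w k R = 0 := by
    intro w k hw hk
    have hP0 := coeffWrt_eq_zero_of_degreeOf_lt hk
    rw [hpr.coeffWrt_eq (hwQ w hw) hw.ne' k (by simp [hP0]), hP0, mul_zero]
  have hlead := hpr.coeffWrt_eq (hwQ z hyz) hyz.ne' (degreeOf z P) hy
  have hdeg : degreeOf z R = degreeOf z P := by
    refine degreeOf_eq_of_coeffWrt_ne_zero ?_ fun k => hvanish z k hyz
    rw [hlead]
    exact mul_ne_zero (pow_ne_zero _ (initialWrt_ne_zero hQ.ne_zero y))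
      (initialWrt_ne_zero hP.ne_zero z)
  have hR : R ≠ 0 := by
    rintro rfl
    exact mem_vars_iff_degreeOf_ne_zero.1 hP.1 (by simp [← hdeg])
  refine ⟨⟨mem_vars_iff_degreeOf_ne_zero.2 (hdeg ▸ mem_vars_iff_degreeOf_ne_zero.1 hP.1),
    fun w hw => not_lt.1 fun hzw => ?_⟩, by rw [initialWrt, hdeg, hlead]; rfl⟩
  -- `P` does not involve `w > z`, so no positive power of `x_w` survives in `R`.
  have hwP : degreeOf w P = 0 := by
    simpa [mem_vars_iff_degreeOf_ne_zero] using fun h => (hP.2 w h).not_gt hzw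
  exact initialWrt_ne_zero hR w
    (hvanish w _ (hyz.trans hzw) (hwP ▸ Nat.pos_of_ne_zero (mem_vars_iff_degreeOf_ne_zero.1 hw)))

lemma IterPrem.hasLV_and_initialWrt_eq {z : σ} {p : σ → Prop} :
    ∀ {M : List (σ × MvPolynomial σ K)} {P R : MvPolynomial σ K}, IterPrem P M R →
      HasLV P z → (∀ j ∈ (initialWrt z P).vars, p j) →
      (∀ e ∈ M, HasLV e.2 e.1 ∧ e.1 < z ∧ (∀ j ∈ (initialWrt e.1 e.2).vars, p j) ∧ ¬ p e.1) →
      HasLV R z ∧ (∀ j ∈ (initialWrt z R).vars, p j) ∧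
        ∃ qs : List ℕ, qs.length = M.length ∧
          initialWrt z R =
            (M.zipWith (fun e q => initialWrt e.1 e.2 ^ q) qs).prod * initialWrt z P
  | [], P, R, hR, hP, hPp, _ => by
    obtain rfl : R = P := hR
    exact ⟨hP, hPp, [], rfl, by simp⟩
  | e :: M, P, R, ⟨S, hS, hR⟩, hP, hPp, hM => by
    obtain ⟨he, hez, hep, hnp⟩ := hM e List.mem_cons_self
    obtain ⟨hSz, hSini⟩ :=
      hS.hasLV_and_initialWrt_eq he hP hez fun h => hnp (hPp _ h)
    have hSp : ∀ j ∈ (initialWrt z S).vars, p j := by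
      rw [hSini]
      exact fun j hj => (Finset.mem_union.1 (vars_mul _ _ hj)).elim
        (fun h => hep j (vars_pow _ _ h)) (hPp j)
    obtain ⟨hRz, hRp, qs, hqs, hRini⟩ :=
      hR.hasLV_and_initialWrt_eq hSz hSp fun e' he' => hM e' (List.mem_cons_of_mem e he')
    refine ⟨hRz, hRp, (P.degreeOf e.1 + 1 - e.2.degreeOf e.1) :: qs, by simp [hqs], ?_⟩
    rw [hRini, hSini, List.zipWith_cons_cons, List.prod_cons]
    ring

lemma TriSet.fst_lt_of_mem_take (T : TriSet K σ) {i : ℕ} (h : i < T.elems.length)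
    {e : σ × MvPolynomial σ K} (he : e ∈ T.elems.take i) : e.1 < (T.elems.get ⟨i, h⟩).1 :=
  T.sorted.rel_of_mem_take_of_mem_drop he (by
    rw [List.get_eq_getElem, List.drop_eq_getElem_cons h]
    exact List.mem_cons_self)

end CharDec

lemma List.prod_zipWith_reverse {α β M : Type*} [CommMonoid M] (f : α → β → M) {l : List α}
    {l' : List β} (h : l.length = l'.length) :
    (zipWith f l.reverse l'.reverse).prod = (zipWith f l l').prod := by
  rw [← reverse_zipWith h, prod_reverse]

open CharDec MvPolynomial

/-- Let `C = [C_1,…,C_r]` be a normal triangular set (with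
its parameters ordered before its leading variables), and let
`C* = [C_1, prem(C_2,[C_1]), …, prem(C_r,[C_1,…,C_{r−1}])]`. Then `C*` is a
normal triangular set with the same leading variables and, for each `i`,
`ini(C_i*) = I_1^{q_1} ⋯ I_{i−1}^{q_{i−1}} · I_i` for suitable nonnegative
integers `q_j`, where `I_j = ini(C_j)`. -/
theorem stmt_9 {K : Type*} [Field K] {n : ℕ} (C : TriSet K (Fin n))
    (hnormal : C.Normal)
    (Cs : List (MvPolynomial (Fin n) K)) (hlen : Cs.length = C.elems.length)
    (hprem : ∀ i : ℕ, ∀ h : i < C.elems.length,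
      IterPrem (C.elems.get ⟨i, h⟩).2 ((C.elems.take i).reverse)
        (Cs.get ⟨i, by omega⟩)) :
    ∀ i : ℕ, ∀ h : i < C.elems.length,
      HasLV (Cs.get ⟨i, by omega⟩) (C.elems.get ⟨i, h⟩).1 ∧
      (∀ j ∈ (initialWrt (C.elems.get ⟨i, h⟩).1 (Cs.get ⟨i, by omega⟩)).vars,
        C.IsParam j) ∧
      ∃ qs : List ℕ, qs.length = i ∧
        initialWrt (C.elems.get ⟨i, h⟩).1 (Cs.get ⟨i, by omega⟩) =
          (List.zipWith (fun e q => (initialWrt e.1 e.2) ^ q) (C.elems.take i) qs).prod *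
            initialWrt (C.elems.get ⟨i, h⟩).1 (C.elems.get ⟨i, h⟩).2 := by
  intro i h
  have hmem : C.elems.get ⟨i, h⟩ ∈ C.elems := List.get_mem _ _
  have hprev : ∀ e ∈ (C.elems.take i).reverse,
      HasLV e.2 e.1 ∧ e.1 < (C.elems.get ⟨i, h⟩).1 ∧
        (∀ j ∈ (initialWrt e.1 e.2).vars, C.IsParam j) ∧ ¬ C.IsParam e.1 := by
    intro e he
    rw [List.mem_reverse] at he
    have heC : e ∈ C.elems := List.mem_of_mem_take he
    exact ⟨C.hlv e heC, C.fst_lt_of_mem_take h he, hnormal e heC,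
      fun hp => hp (List.mem_map_of_mem heC)⟩
  obtain ⟨hlv, hparam, qs, hqs, hini⟩ :=
    (hprem i h).hasLV_and_initialWrt_eq (C.hlv _ hmem) (hnormal _ hmem) hprev
  refine ⟨hlv, hparam, qs.reverse, by simp [hqs]; omega, ?_⟩
  rw [hini, ← List.prod_zipWith_reverse _ (by simp [hqs]), List.reverse_reverse]
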